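/- With the piecewise frequency model above and t_nadir = t_D + ΔP/p_rr (the time when the derivative vanishes), the frequency drop is f_0 − f_nadir = (1/M)·(ΔP·(t_D − t_0) + ΔP²/(2 p_rr)). In particular, the frequency drop is strictly increasing in ΔP (for ΔP > 0, p_rr > 0, M > 0, t_D ≥ t_0). -/

import Mathlib

/-! The integrand is ΔP/M up to t_D and then decreases linearly to zero at the nadir, so the
drop is a rectangle ΔP·(t_D − t_0) plus a triangle of base ΔP/p_rr and height ΔP, divided by M. -/

open intervalIntegral

theorem integral_max_zero_of_nonpos_of_nonneg {a b : ℝ} (ha : a ≤ 0) (hb : 0 ≤ b) :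
    ∫ u in a..b, max u 0 = b ^ 2 / 2 := by
  have hcont : Continuous fun u : ℝ => max u 0 := by fun_prop
  have hneg : ∫ u in a..0, max u 0 = 0 := by
    rw [integral_congr (g := fun _ => 0) fun u hu => max_eq_right (Set.uIcc_of_le ha ▸ hu).2]
    exact integral_zero
  have hpos : ∫ u in (0 : ℝ)..b, max u 0 = ∫ u in (0 : ℝ)..b, u :=
    integral_congr fun u hu => max_eq_left (Set.uIcc_of_le hb ▸ hu).1
  rw [← integral_add_adjacent_intervals (hcont.intervalIntegrable a 0)
    (hcont.intervalIntegrable 0 b), hneg, hpos, integral_id]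
  ring

theorem integral_sub_mul_max_sub_zero (c r : ℝ) {a d b : ℝ} (had : a ≤ d) (hdb : d ≤ b) :
    ∫ t in a..b, (c - r * max (t - d) 0) = c * (b - a) - r * ((b - d) ^ 2 / 2) := by
  have hramp : IntervalIntegrable (fun t => r * max (t - d) 0) MeasureTheory.volume a b :=
    (by fun_prop : Continuous fun t : ℝ => r * max (t - d) 0).intervalIntegrable a b
  rw [integral_sub intervalIntegrable_const hramp, integral_const, integral_const_mul,
    integral_comp_sub_right (fun u => max u 0),
    integral_max_zero_of_nonpos_of_nonneg (by linarith) (by linarith), smul_eq_mul]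
  ring

theorem strictMonoOn_mul_add_sq_div {a c : ℝ} (ha : 0 ≤ a) (hc : 0 < c) :
    StrictMonoOn (fun x : ℝ => x * a + x ^ 2 / c) (Set.Ici 0) := fun _ hx _ _ hxy =>
  add_lt_add_of_le_of_lt (mul_le_mul_of_nonneg_right hxy.le ha)
    (div_lt_div_of_pos_right (pow_lt_pow_left₀ hxy hx two_ne_zero) hc)

theorem frequency_drop_at_nadir_and_monotone
    (ΔP prr M t0 tD : ℝ)
    (hΔP : 0 < ΔP) (hprr : 0 < prr) (hM : 0 < M) (htD : t0 ≤ tD) :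
    (∫ t in t0..(tD + ΔP / prr), (ΔP - prr * max (t - tD) 0) / M
        = (1 / M) * (ΔP * (tD - t0) + ΔP ^ 2 / (2 * prr))) ∧
      StrictMonoOn (fun x : ℝ => (1 / M) * (x * (tD - t0) + x ^ 2 / (2 * prr)))
        (Set.Ioi 0) := by
  constructor
  · have hnadir : tD ≤ tD + ΔP / prr := le_add_of_nonneg_right (div_pos hΔP hprr).le
    rw [integral_div, integral_sub_mul_max_sub_zero ΔP prr htD hnadir]
    field_simp
    ring
  · have hdrop := strictMonoOn_mul_add_sq_div (sub_nonneg.2 htD) (mul_pos two_pos hprr)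
    exact fun x hx y hy hxy => mul_lt_mul_of_pos_left
      (hdrop (Set.Ioi_subset_Ici_self hx) (Set.Ioi_subset_Ici_self hy) hxy) (one_div_pos.2 hM)
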